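/- Let X be a real symmetric n×n matrix all of whose entries lie in {0,1}, with X(i,i) = 1 for every index i, and suppose X is positive semidefinite. Then there exists a positive integer K and a binary n×K matrix Y such that every row of Y has exactly one nonzero entry and X = Y Yᵀ. -/

import Mathlib

/-!
Evaluating the quadratic form of `X` at `eᵢ - eⱼ + eₖ` gives
`2 Xᵢⱼ + 2 Xⱼₖ ≤ Xᵢᵢ + Xⱼⱼ + Xₖₖ + 2 Xᵢₖ`; with unit diagonal, `Xᵢⱼ = Xⱼₖ = 1` forces `Xᵢₖ ≥ 1/2`,
hence `Xᵢₖ = 1` when `X` is binary. So `Xᵢⱼ = 1` is an equivalence relation, and `X` is the Gram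
matrix of the indicator matrix of its classes.
-/

open Matrix

namespace Matrix

section PosSemidef

variable {ι R : Type*} [Fintype ι] [DecidableEq ι]

theorem PosSemidef.two_mul_apply_add_two_mul_apply_le [CommRing R] [PartialOrder R]
    [IsOrderedAddMonoid R] [StarRing R] [TrivialStar R] {X : Matrix ι ι R} (hX : X.PosSemidef)
    (i j k : ι) : 2 * X i j + 2 * X j k ≤ X i i + X j j + X k k + 2 * X i k := by
  have hsymm : ∀ a b, X a b = X b a := fun a b => by simpa using (hX.1.apply a b).symm
  have h := hX.dotProduct_mulVec_nonneg (Pi.single i 1 - Pi.single j 1 + Pi.single k 1)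
  simp only [star_trivial, mulVec_add, mulVec_sub, mulVec_single_one, add_dotProduct,
    sub_dotProduct, dotProduct_add, dotProduct_sub, single_dotProduct, one_mul, col_apply] at h
  rw [← sub_nonneg]
  convert h using 1
  rw [hsymm j i, hsymm k i, hsymm k j]
  ring

variable [CommRing R] [LinearOrder R] [IsStrictOrderedRing R] [StarRing R] [TrivialStar R]
  {X : Matrix ι ι R}

theorem PosSemidef.apply_eq_one_trans (hX : X.PosSemidef) (hbin : ∀ i j, X i j = 0 ∨ X i j = 1)
    (hdiag : ∀ i, X i i = 1) {i j k : ι} (hij : X i j = 1) (hjk : X j k = 1) : X i k = 1 := by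
  have h := hX.two_mul_apply_add_two_mul_apply_le i j k
  rw [hij, hjk, hdiag, hdiag, hdiag] at h
  refine (hbin i k).resolve_left fun hik => ?_
  rw [hik] at h
  linarith

theorem PosSemidef.equivalence_apply_eq_one (hX : X.PosSemidef)
    (hbin : ∀ i j, X i j = 0 ∨ X i j = 1) (hdiag : ∀ i, X i i = 1) :
    Equivalence fun i j => X i j = 1 where
  refl := hdiag
  symm {i j} h := by simpa [h] using hX.1.apply i j
  trans := hX.apply_eq_one_trans hbin hdiag

end PosSemidef

section ClusterIndicator

variable {ι κ : Type*} [DecidableEq κ]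

def clusterIndicator (R : Type*) [Zero R] [One R] (c : ι → κ) : Matrix ι κ R :=
  of fun i => Pi.single (c i) 1

theorem clusterIndicator_apply {R : Type*} [Zero R] [One R] (c : ι → κ) (i : ι) (k : κ) :
    clusterIndicator R c i k = if k = c i then 1 else 0 :=
  Pi.single_apply _ _ _

theorem clusterIndicator_mul_transpose {R : Type*} [Fintype κ] [NonAssocSemiring R]
    (c : ι → κ) :
    clusterIndicator R c * (clusterIndicator R c)ᵀ =
      of fun i j => if c i = c j then 1 else 0 := by
  ext i j
  simp [mul_apply, clusterIndicator_apply, eq_comm]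

end ClusterIndicator

end Matrix

/-- A binary symmetric PSD matrix with unit diagonal is the Gram matrix
of a cluster-indicator matrix: `X = Y * Yᵀ` with `Y` binary and every row
of `Y` having exactly one nonzero entry. -/
theorem binary_psd_is_gram_of_indicator
    (n : ℕ) (X : Matrix (Fin n) (Fin n) ℝ)
    (hbin : ∀ i j, X i j = 0 ∨ X i j = 1)
    (hdiag : ∀ i, X i i = 1)
    (hpsd : X.PosSemidef) :
    ∃ (K : ℕ), 0 < K ∧ ∃ Y : Matrix (Fin n) (Fin K) ℝ,
      (∀ i k, Y i k = 0 ∨ Y i k = 1) ∧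
      (∀ i, ∃! k, Y i k = 1) ∧
      X = Y * Yᵀ := by
  classical
  let s : Setoid (Fin n) := ⟨_, hpsd.equivalence_apply_eq_one hbin hdiag⟩
  -- one spare label keeps `K` positive when `n = 0`
  let c : Fin n → Fin (Fintype.card (Quotient s) + 1) :=
    fun i => (Fintype.equivFin _ ⟦i⟧).castSucc
  have hc : ∀ i j, c i = c j ↔ X i j = 1 := fun i j => by
    simp only [c, Fin.castSucc_inj, EmbeddingLike.apply_eq_iff_eq, Quotient.eq]
    rfl
  refine ⟨_, Nat.succ_pos _, clusterIndicator ℝ c, fun i k => ?_, fun i => ?_, ?_⟩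
  · rw [clusterIndicator_apply]
    split_ifs <;> simp
  · exact ⟨c i, by simp [clusterIndicator_apply],
      fun k hk => by simpa [clusterIndicator_apply] using hk⟩
  · rw [clusterIndicator_mul_transpose]
    ext i j
    rcases hbin i j with h | h <;> simp [hc, h]
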